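/- Let K ≥ 3, τ ∈ ℝ, and let (μ_k)_{k=1}^K be a concave sequence of reals with μ_k ≠ τ for all k and with μ_l > τ for at least one l; set Δ_k = |μ_k − τ| and Δ_min = min_{k∈[K]} Δ_k. Then there exists a sequence of reals (μ'_k)_{k=1}^K, with gaps Δ'_k = |μ'_k − τ|, such that: (a) (μ'_k)_{k=1}^K is concave; (b) there exists k ∈ [K] with sign(μ_k − τ) ≠ sign(μ'_k − τ); (c) for all k ∈ [K], |μ'_k − μ_k| ≤ 3·Δ_min; and (d) for all k ∈ [K], Δ_k/10 ≤ Δ'_k ≤ 3·Δ_k. -/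

import Mathlib

/-!
Let `ε = Δ_min`. If the closest arm lies below `τ`, shift the whole sequence up by some
`c ∈ (ε, 2ε]`; this keeps concavity and flips that arm, and an arm below `τ` with gap `Δ`
keeps `Δ'/Δ ∈ [1/10, 3]` as long as `c ∉ (9Δ/10, 11Δ/10)`. Concavity makes the arms below `τ`
a prefix and a suffix whose gaps grow by at least `2ε` per step away from the arms above `τ`,
so at most two arms below `τ` have gap `< 3ε`, and one of `c = 11ε/10` and `c = 2ε` is never
blocked.

If the closest arm `e` lies above `τ`, replace `μ` by `min μ ℓ`, where `ℓ` is a supporting line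
of `μ` at `e` lowered by `2ε`. This is concave, moves every arm by at most `2ε` and sends `e`
to `τ - ε`. Choosing `e` with a neighbour below `τ` (or at an end of the sequence) allows a
slope of size at least `2ε`, so on every other arm `ℓ` stays at distance `≥ ε` from `τ` on
the side of the arm, or lies below `τ - 3ε` where it cannot cut an arm above `τ`.
-/

/-- A finite sequence `(μ_k)_{k=1}^K` is concave if `μ_{k-1} + μ_{k+1} ≤ 2 μ_k`
for all `1 < k < K` (here stated with 0-based indices). -/
def ConcaveSeq {K : ℕ} (μ : Fin K → ℝ) : Prop :=
  ∀ (i : ℕ) (h : i + 2 < K),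
    μ ⟨i, by omega⟩ + μ ⟨i + 2, h⟩ ≤ 2 * μ ⟨i + 1, by omega⟩

theorem Nat.exists_le_lt_and_not_succ {P : ℕ → Prop} {a b : ℕ} (hab : a ≤ b) (ha : P a)
    (hb : ¬P b) : ∃ j, a ≤ j ∧ j < b ∧ P j ∧ ¬P (j + 1) := by
  induction b, hab using Nat.le_induction with
  | base => exact absurd ha hb
  | succ b hab ih =>
    by_cases h : P b
    · exact ⟨b, hab, b.lt_succ_self, h, hb⟩
    · obtain ⟨j, haj, hjb, hj, hj'⟩ := ih h
      exact ⟨j, haj, by omega, hj, hj'⟩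

section Gap

variable {x τ ε : ℝ}

theorem le_sub_of_le_abs_sub (h : ε ≤ |x - τ|) (hx : x ≤ τ) : x ≤ τ - ε := by
  rw [abs_of_nonpos (by linarith)] at h; linarith

theorem add_le_of_le_abs_sub (h : ε ≤ |x - τ|) (hx : τ ≤ x) : τ + ε ≤ x := by
  rw [abs_of_nonneg (by linarith)] at h; linarith

theorem abs_min_sub_bounds {ℓ : ℝ} (hx : ε ≤ |x - τ|) (hℓ : x - 2 * ε ≤ ℓ)
    (hsteep : ℓ = τ - ε ∨ τ + ε ≤ ℓ ∨ ℓ ≤ τ - 3 * ε) :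
    |x - τ| / 10 ≤ |min x ℓ - τ| ∧ |min x ℓ - τ| ≤ 3 * |x - τ| := by
  rcases le_total x ℓ with h | h
  · rw [min_eq_left h]; constructor <;> linarith [abs_nonneg (x - τ)]
  rw [min_eq_right h]
  rcases abs_cases (x - τ) with ⟨hx', _⟩ | ⟨hx', _⟩ <;>
    rcases abs_cases (ℓ - τ) with ⟨hℓ', _⟩ | ⟨hℓ', _⟩ <;>
    rw [hx'] at hx ⊢ <;> rw [hℓ'] <;> constructor <;>
    rcases hsteep with h' | h' | h' <;> linarith

theorem abs_add_sub_bounds {c : ℝ} (hx : ε ≤ |x - τ|) (hc : 0 ≤ c) (hc' : c ≤ 2 * ε)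
    (hband : x < τ → (τ - x) / 10 ≤ |x + c - τ|) :
    |x - τ| / 10 ≤ |x + c - τ| ∧ |x + c - τ| ≤ 3 * |x - τ| := by
  rcases lt_or_ge x τ with h | h
  · have hx' : |x - τ| = τ - x := by rw [abs_of_neg (by linarith)]; ring
    have hle : |x + c - τ| ≤ |x - τ| + c := by
      simpa [add_sub_right_comm, abs_of_nonneg hc] using abs_add_le (x - τ) c
    rw [hx'] at hx hle ⊢
    exact ⟨hband h, by linarith⟩
  · rw [abs_of_nonneg (by linarith : 0 ≤ x - τ)] at hx ⊢
    rw [abs_of_nonneg (by linarith)]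
    constructor <;> linarith

end Gap

theorem Real.sign_ne_of_mul_neg {x y : ℝ} (h : x * y < 0) : Real.sign x ≠ Real.sign y := by
  rcases mul_neg_iff.1 h with ⟨hx, hy⟩ | ⟨hx, hy⟩
  · rw [Real.sign_of_pos hx, Real.sign_of_neg hy]; norm_num
  · rw [Real.sign_of_neg hx, Real.sign_of_pos hy]; norm_num

def ConcaveUpTo (K : ℕ) (f : ℕ → ℝ) : Prop :=
  ∀ i, i + 2 < K → f i + f (i + 2) ≤ 2 * f (i + 1)

namespace ConcaveUpTo

variable {K : ℕ} {f g : ℕ → ℝ} {τ ε : ℝ}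

theorem min (hf : ConcaveUpTo K f) (hg : ConcaveUpTo K g) :
    ConcaveUpTo K fun i => min (f i) (g i) := by
  intro i hi
  dsimp only
  rcases le_total (f (i + 1)) (g (i + 1)) with h | h
  · rw [min_eq_left h]
    linarith [hf i hi, min_le_left (f i) (g i), min_le_left (f (i + 2)) (g (i + 2))]
  · rw [min_eq_right h]
    linarith [hg i hi, min_le_right (f i) (g i), min_le_right (f (i + 2)) (g (i + 2))]

theorem add_const (hf : ConcaveUpTo K f) (c : ℝ) : ConcaveUpTo K fun i => f i + c := by
  intro i hi
  linarith [hf i hi]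

theorem affine (a x₀ s : ℝ) : ConcaveUpTo K fun i => a + ((i : ℝ) - x₀) * s := by
  intro i _
  push_cast
  linarith

theorem sub_antitone (hf : ConcaveUpTo K f) {i j : ℕ} (hij : i ≤ j) (hj : j + 1 < K) :
    f (j + 1) - f j ≤ f (i + 1) - f i := by
  induction j, hij using Nat.le_induction with
  | base => exact le_rfl
  | succ j hij ih => linarith [hf j (by omega), ih (by omega)]

theorem le_tangent_of_le (hf : ConcaveUpTo K f) {e k : ℕ} {s : ℝ} (hek : e ≤ k) (hk : k < K)
    (hs : e + 1 < K → f (e + 1) - f e ≤ s) : f k ≤ f e + ((k : ℝ) - e) * s := by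
  induction k, hek using Nat.le_induction with
  | base => simp
  | succ k hek ih =>
    have := hf.sub_antitone hek hk
    push_cast
    linarith [ih (by omega), hs (by omega)]

theorem le_tangent_of_ge (hf : ConcaveUpTo K f) {e k : ℕ} {s : ℝ} (hke : k ≤ e) (he : e < K)
    (hs : 0 < e → s ≤ f e - f (e - 1)) : f k ≤ f e + ((k : ℝ) - e) * s := by
  induction e, hke using Nat.le_induction with
  | base => simp
  | succ e hke ih =>
    have hs' : s ≤ f (e + 1) - f e := by simpa using hs (by omega)
    have ih' := ih (by omega) fun he0 => by
      have := hf.sub_antitone (show e - 1 ≤ e by omega) he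
      rw [Nat.sub_add_cancel he0] at this
      linarith
    push_cast
    linarith

theorem le_tangent (hf : ConcaveUpTo K f) {e k : ℕ} {s : ℝ} (he : e < K) (hk : k < K)
    (hright : e + 1 < K → f (e + 1) - f e ≤ s) (hleft : 0 < e → s ≤ f e - f (e - 1)) :
    f k ≤ f e + ((k : ℝ) - e) * s := by
  rcases le_total e k with h | h
  exacts [hf.le_tangent_of_le h hk hright, hf.le_tangent_of_ge h he hleft]

theorem lt_succ_of_mem_Ioo (hf : ConcaveUpTo K f) (hgap : ∀ k < K, ε ≤ |f k - τ|) {x q : ℕ}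
    (hxq : x < q) (hq : q < K) (hfq : τ < f q)
    (hxI : f x ∈ Set.Ioo (τ - 3 * ε) τ) : τ < f (x + 1) := by
  by_contra! h
  have hx1 := le_sub_of_le_abs_sub (hgap _ (by omega)) h
  obtain ⟨j, hxj, hjq, hj, hj1⟩ := Nat.exists_le_lt_and_not_succ (P := fun j => f j ≤ τ)
    (show x + 1 ≤ q by omega) h hfq.not_ge
  have hj' := le_sub_of_le_abs_sub (hgap j (by omega)) hj
  have hj1' := add_le_of_le_abs_sub (hgap (j + 1) (by omega)) (le_of_not_ge hj1)
  have := hf.sub_antitone (show x ≤ j by omega) (by omega)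
  linarith [hxI.1]

theorem lt_pred_of_mem_Ioo (hf : ConcaveUpTo K f) (hgap : ∀ k < K, ε ≤ |f k - τ|) {x q : ℕ}
    (hqx : q < x) (hx : x < K) (hfq : τ < f q)
    (hxI : f x ∈ Set.Ioo (τ - 3 * ε) τ) : τ < f (x - 1) := by
  by_contra! h
  have hx1 := le_sub_of_le_abs_sub (hgap _ (by omega)) h
  obtain ⟨j, hqj, hjx, hj, hj1⟩ := Nat.exists_le_lt_and_not_succ (P := fun j => τ < f j)
    (show q ≤ x - 1 by omega) hfq h.not_gt
  have hj' := add_le_of_le_abs_sub (hgap j (by omega)) hj.le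
  have hj1' := le_sub_of_le_abs_sub (hgap (j + 1) (by omega)) (le_of_not_gt hj1)
  have := hf.sub_antitone (show j ≤ x - 1 by omega) (by omega)
  rw [Nat.sub_add_cancel (by omega)] at this
  linarith [hxI.1]

theorem notMem_Ioo_of_between (hf : ConcaveUpTo K f) (hgap : ∀ k < K, ε ≤ |f k - τ|)
    {a x b : ℕ} (hax : a < x) (hxb : x < b) (hb : b < K)
    (hfa : τ < f a) (hfb : τ < f b) : f x ∉ Set.Ioo (τ - 3 * ε) τ := by
  intro hxI
  have h₁ := hf.lt_succ_of_mem_Ioo hgap hxb hb hfb hxI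
  have h₂ := hf.lt_pred_of_mem_Ioo hgap hax (by omega) hfa hxI
  have := hf (x - 1) (by omega)
  rw [show x - 1 + 2 = x + 1 by omega, Nat.sub_add_cancel (by omega)] at this
  linarith [hxI.2]

theorem eq_of_mem_Ioo_of_lt_iff (hf : ConcaveUpTo K f) (hgap : ∀ k < K, ε ≤ |f k - τ|)
    {p x y : ℕ} (hp : p < K) (hfp : τ < f p) (hx : x < K)
    (hy : y < K) (hxI : f x ∈ Set.Ioo (τ - 3 * ε) τ) (hyI : f y ∈ Set.Ioo (τ - 3 * ε) τ)
    (hside : x < p ↔ y < p) : x = y := by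
  by_contra hxy
  wlog hlt : x < y generalizing x y
  · exact this hy hx hyI hxI hside.symm (Ne.symm hxy) (by omega)
  have hxp : x ≠ p := by rintro rfl; linarith [hxI.2]
  have hyp : y ≠ p := by rintro rfl; linarith [hyI.2]
  by_cases hyp' : y < p
  · have h₁ := hf.lt_succ_of_mem_Ioo hgap (hside.2 hyp') hp hfp hxI
    have hx1y : x + 1 ≠ y := by rintro rfl; linarith [hyI.2]
    exact hf.notMem_Ioo_of_between hgap (show x + 1 < y by omega) hyp' hp h₁ hfp hyI
  · have h₁ := hf.lt_pred_of_mem_Ioo hgap (show p < y by omega) hy hfp hyI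
    have hxy1 : x ≠ y - 1 := by rintro rfl; linarith [hxI.2]
    exact hf.notMem_Ioo_of_between hgap (show p < x by omega) (show x < y - 1 by omega)
      (by omega) hfp h₁ hxI

end ConcaveUpTo

def IsFlippingPerturbation (K : ℕ) (τ ε : ℝ) (f g : ℕ → ℝ) : Prop :=
  ConcaveUpTo K g ∧ (∃ k < K, (f k - τ) * (g k - τ) < 0) ∧
    ∀ k < K, |g k - f k| ≤ 3 * ε ∧
      (|f k - τ| / 10 ≤ |g k - τ| ∧ |g k - τ| ≤ 3 * |f k - τ|)

section Perturbation

variable {K : ℕ} {f : ℕ → ℝ} {τ ε : ℝ}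

theorem isFlippingPerturbation_add_const (hf : ConcaveUpTo K f)
    (hgap : ∀ k < K, ε ≤ |f k - τ|) {m : ℕ} (hm : m < K) (hfm : f m = τ - ε) {c : ℝ}
    (hc : ε < c) (hc' : c ≤ 2 * ε)
    (hband : ∀ k < K, f k < τ → (τ - f k) / 10 ≤ |f k + c - τ|) :
    IsFlippingPerturbation K τ ε f fun k => f k + c := by
  refine ⟨hf.add_const c, ⟨m, hm, ?_⟩, fun k hk => ⟨?_, ?_⟩⟩
  · rw [hfm]; nlinarith
  · rw [add_sub_cancel_left, abs_of_pos (by linarith)]; linarith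
  · exact abs_add_sub_bounds (hgap k hk) (by linarith) hc' (hband k hk)

/- The shift `11ε/10` is blocked only by an arm with gap in `(ε, 11ε/9)`, the shift `2ε` only by
one with gap in `(20ε/11, 20ε/9)`; together with the closest arm these would be three arms in
`(τ - 3ε, τ)`, two of them on the same side of `p`. -/
theorem exists_shift_of_eq_sub (hf : ConcaveUpTo K f) (hε : 0 < ε)
    (hgap : ∀ k < K, ε ≤ |f k - τ|) {m p : ℕ} (hm : m < K) (hfm : f m = τ - ε) (hp : p < K)
    (hfp : τ < f p) :
    ∃ c, ε < c ∧ c ≤ 2 * ε ∧ ∀ k < K, f k < τ → (τ - f k) / 10 ≤ |f k + c - τ| := by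
  by_contra! h
  obtain ⟨k₁, hk₁, hk₁τ, h₁⟩ := h (11 / 10 * ε) (by linarith) (by linarith)
  obtain ⟨k₂, hk₂, hk₂τ, h₂⟩ := h (2 * ε) (by linarith) le_rfl
  rw [abs_lt] at h₁ h₂
  have hmI : f m ∈ Set.Ioo (τ - 3 * ε) τ := by rw [hfm]; constructor <;> linarith
  have h₁I : f k₁ ∈ Set.Ioo (τ - 3 * ε) τ := ⟨by linarith, hk₁τ⟩
  have h₂I : f k₂ ∈ Set.Ioo (τ - 3 * ε) τ := ⟨by linarith, hk₂τ⟩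
  have hm₁ : m ≠ k₁ := by rintro rfl; linarith
  have hm₂ : m ≠ k₂ := by rintro rfl; linarith
  have h₁₂ : k₁ ≠ k₂ := by rintro rfl; linarith
  have : (m < p ↔ k₁ < p) ∨ (m < p ↔ k₂ < p) ∨ (k₁ < p ↔ k₂ < p) := by tauto
  rcases this with h | h | h
  · exact hm₁ (hf.eq_of_mem_Ioo_of_lt_iff hgap hp hfp hm hk₁ hmI h₁I h)
  · exact hm₂ (hf.eq_of_mem_Ioo_of_lt_iff hgap hp hfp hm hk₂ hmI h₂I h)
  · exact h₁₂ (hf.eq_of_mem_Ioo_of_lt_iff hgap hp hfp hk₁ hk₂ h₁I h₂I h)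

theorem isFlippingPerturbation_min_line (hf : ConcaveUpTo K f) (hε : 0 < ε)
    (hgap : ∀ k < K, ε ≤ |f k - τ|) {e : ℕ} (he : e < K) (hfe : f e = τ + ε) {s : ℝ}
    (hs : 2 * ε ≤ |s|) (htan : ∀ k < K, f k ≤ f e + ((k : ℝ) - e) * s) :
    IsFlippingPerturbation K τ ε f fun k => min (f k) (τ - ε + ((k : ℝ) - e) * s) := by
  refine ⟨hf.min (ConcaveUpTo.affine _ _ _), ⟨e, he, ?_⟩, fun k hk => ?_⟩
  · simp only [sub_self, zero_mul, add_zero]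
    rw [hfe, min_eq_right (by linarith)]
    nlinarith
  beta_reduce
  have hℓ : f k - 2 * ε ≤ τ - ε + ((k : ℝ) - e) * s := by linarith [htan k hk]
  refine ⟨?_, abs_min_sub_bounds (hgap k hk) hℓ ?_⟩
  · have : f k - 2 * ε ≤ min (f k) (τ - ε + ((k : ℝ) - e) * s) := le_min (by linarith) hℓ
    rw [abs_le]
    constructor <;> linarith [min_le_left (f k) (τ - ε + ((k : ℝ) - e) * s)]
  rcases eq_or_ne k e with rfl | hke
  · left; ring
  have hke' : 1 ≤ |(k : ℝ) - e| := by
    have := Int.one_le_abs (show (k : ℤ) - e ≠ 0 by omega)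
    exact_mod_cast this
  have : 2 * ε ≤ |((k : ℝ) - e) * s| := by
    rw [abs_mul]; nlinarith [abs_nonneg s]
  rcases le_abs'.1 this with h | h
  · right; right; linarith
  · right; left; linarith

/- The last arm at `τ + ε` works: if its right neighbour is above `τ`, it is above `τ + ε`, and
concavity pushes the left neighbour below `τ + ε`, hence below `τ`. -/
theorem exists_steep_of_eq_add (hf : ConcaveUpTo K f) (hgap : ∀ k < K, ε ≤ |f k - τ|)
    {m : ℕ} (hm : m < K) (hfm : f m = τ + ε) :
    ∃ e < K, f e = τ + ε ∧ ((e + 1 < K → f (e + 1) < τ) ∨ (0 < e → f (e - 1) < τ)) := by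
  classical
  set e := Nat.findGreatest (fun n => n < K ∧ f n = τ + ε) K
  obtain ⟨he, hfe⟩ : e < K ∧ f e = τ + ε :=
    Nat.findGreatest_spec (P := fun n => n < K ∧ f n = τ + ε) hm.le ⟨hm, hfm⟩
  refine ⟨e, he, hfe, ?_⟩
  by_contra! h
  obtain ⟨⟨he1, hτ1⟩, he0, hτ0⟩ := h
  have h₁ := add_le_of_le_abs_sub (hgap _ he1) hτ1
  have h₀ := add_le_of_le_abs_sub (hgap _ (by omega)) hτ0
  have hne : f (e + 1) ≠ τ + ε := fun h =>
    Nat.findGreatest_is_greatest (lt_add_one e) he1.le ⟨he1, h⟩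
  have := hf (e - 1) (by omega)
  rw [show e - 1 + 2 = e + 1 by omega, Nat.sub_add_cancel he0] at this
  exact hne (by linarith)

theorem exists_steep_tangent_of_right (hf : ConcaveUpTo K f) (hgap : ∀ k < K, ε ≤ |f k - τ|)
    {e : ℕ} (he : e < K) (hfe : f e = τ + ε) (hright : e + 1 < K → f (e + 1) < τ) :
    ∃ s, 2 * ε ≤ |s| ∧ ∀ k < K, f k ≤ f e + ((k : ℝ) - e) * s := by
  by_cases he1 : e + 1 < K
  · have := le_sub_of_le_abs_sub (hgap _ he1) (hright he1).le
    refine ⟨f (e + 1) - f e, le_abs'.2 (Or.inl (by linarith)),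
      fun k hk => hf.le_tangent he hk (fun _ => le_rfl) fun he0 => ?_⟩
    have := hf.sub_antitone (show e - 1 ≤ e by omega) he1
    rwa [Nat.sub_add_cancel he0] at this
  · exact ⟨min (f e - f (e - 1)) (-(2 * ε)), le_abs'.2 (Or.inl (min_le_right _ _)),
      fun k hk => hf.le_tangent he hk (fun h => absurd h he1) fun _ => min_le_left _ _⟩

theorem exists_steep_tangent_of_left (hf : ConcaveUpTo K f) (hgap : ∀ k < K, ε ≤ |f k - τ|)
    {e : ℕ} (he : e < K) (hfe : f e = τ + ε) (hleft : 0 < e → f (e - 1) < τ) :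
    ∃ s, 2 * ε ≤ |s| ∧ ∀ k < K, f k ≤ f e + ((k : ℝ) - e) * s := by
  by_cases he0 : 0 < e
  · have := le_sub_of_le_abs_sub (hgap _ (by omega)) (hleft he0).le
    refine ⟨f e - f (e - 1), le_abs'.2 (Or.inr (by linarith)),
      fun k hk => hf.le_tangent he hk (fun he1 => ?_) fun _ => le_rfl⟩
    have := hf.sub_antitone (show e - 1 ≤ e by omega) he1
    rwa [Nat.sub_add_cancel he0] at this
  · exact ⟨max (f (e + 1) - f e) (2 * ε), le_abs'.2 (Or.inr (le_max_right _ _)),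
      fun k hk => hf.le_tangent he hk (fun _ => le_max_left _ _) fun h => absurd h he0⟩

theorem exists_isFlippingPerturbation (hf : ConcaveUpTo K f) (hε : 0 < ε)
    (hgap : ∀ k < K, ε ≤ |f k - τ|) {m p : ℕ} (hm : m < K) (hfm : |f m - τ| = ε)
    (hp : p < K) (hfp : τ < f p) : ∃ g, IsFlippingPerturbation K τ ε f g := by
  rcases abs_eq hε.le |>.1 hfm with hfm | hfm
  · obtain ⟨e, he, hfe, hsteep⟩ := exists_steep_of_eq_add hf hgap hm (by linarith)
    obtain ⟨s, hs, htan⟩ := hsteep.elim (exists_steep_tangent_of_right hf hgap he hfe)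
      (exists_steep_tangent_of_left hf hgap he hfe)
    exact ⟨_, isFlippingPerturbation_min_line hf hε hgap he hfe hs htan⟩
  · obtain ⟨c, hc, hc', hband⟩ := exists_shift_of_eq_sub hf hε hgap hm (by linarith) hp hfp
    exact ⟨_, isFlippingPerturbation_add_const hf hgap hm (by linarith) hc hc' hband⟩

end Perturbation

theorem concave_perturbation
    (K : ℕ) (τ : ℝ) (μ : Fin K → ℝ) (hconc : ConcaveSeq μ)
    (hne : ∀ k, μ k ≠ τ) (habove : ∃ l, τ < μ l) :
    ∃ μ' : Fin K → ℝ,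
      ConcaveSeq μ' ∧
      (∃ k, Real.sign (μ k - τ) ≠ Real.sign (μ' k - τ)) ∧
      (∀ k, |μ' k - μ k| ≤ 3 * (⨅ j, |μ j - τ|)) ∧
      (∀ k, |μ k - τ| / 10 ≤ |μ' k - τ| ∧ |μ' k - τ| ≤ 3 * |μ k - τ|) := by
  obtain ⟨p, hp⟩ := habove
  have : Nonempty (Fin K) := ⟨p⟩
  obtain ⟨m, hm⟩ := exists_eq_ciInf_of_finite (f := fun j => |μ j - τ|)
  set f : ℕ → ℝ := fun i => if h : i < K then μ ⟨i, h⟩ else 0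
  have hfμ (k : Fin K) : f k = μ k := dif_pos k.isLt
  have hf : ConcaveUpTo K f := fun i hi => by simpa only [← hfμ] using hconc i hi
  have hε : 0 < ⨅ j, |μ j - τ| := hm ▸ abs_pos.2 (sub_ne_zero.2 (hne m))
  have hgap (k : ℕ) (hk : k < K) : (⨅ j, |μ j - τ|) ≤ |f k - τ| := by
    rw [hfμ ⟨k, hk⟩]; exact ciInf_le (Finite.bddBelow_range _) _
  obtain ⟨g, hg, ⟨k, hk, hflip⟩, hbounds⟩ := exists_isFlippingPerturbation hf hε hgap m.isLt
    ((hfμ m).symm ▸ hm) p.isLt ((hfμ p).symm ▸ hp)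
  refine ⟨fun k => g k, hg, ⟨⟨k, hk⟩, ?_⟩, fun k => ?_, fun k => ?_⟩
  · exact Real.sign_ne_of_mul_neg (hfμ ⟨k, hk⟩ ▸ hflip)
  · exact hfμ k ▸ (hbounds k k.isLt).1
  · exact hfμ k ▸ (hbounds k k.isLt).2
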